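/- Let a, b ∈ F be orthonormal vectors and let A : F → F be a linear isometry with determinant 1 (A ∈ SO(4)) such that X_{Aa∧Ab} = X_{a∧b} (i.e. for all p ∈ F, ⟨Ab, p⟩ • Aa − ⟨Aa, p⟩ • Ab = ⟨b, p⟩ • a − ⟨a, p⟩ • b). Then there exist an orthonormal basis {a, b, c, d} of F and angles θ₁, θ₂ ∈ ℝ such that Aa = cos θ₁ • a + sin θ₁ • b, Ab = −sin θ₁ • a + cos θ₁ • b, Ac = cos θ₂ • c + sin θ₂ • d, and Ad = −sin θ₂ • c + cos θ₂ • d; that is, A lies in SO(2) × SO(2) with respect to an adapted basis. (This is the conclusion in the proof of Theorem 4.1 of the paper that the only isometries of SO(4) which make a Killing field descend to a quotient lie in SO(2) × SO(2).) -/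

import Mathlib

open Real RealInnerProductSpace

noncomputable section

/-- The flat Euclidean four-space, whose unit sphere is `S³`. -/
abbrev F4 : Type := EuclideanSpace ℝ (Fin 4)

/-- The standard orthonormal basis of `F4`. -/
def sb4 (i : Fin 4) : F4 := EuclideanSpace.single i (1 : ℝ)

/-- The vector field `X_{a∧b}(p) = ⟨b, p⟩ • a - ⟨a, p⟩ • b`; restricted to the unit
sphere `S³ ⊂ F4` these are exactly the Killing vector fields of `S³`. -/
def KF (a b : F4) : F4 → F4 := fun p => ⟪b, p⟫ • a - ⟪a, p⟫ • b

lemma exists_cos_sin (x y : ℝ) (h : x^2 + y^2 = 1) : ∃ θ : ℝ, cos θ = x ∧ sin θ = y := by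
  have hz : (⟨x, y⟩ : ℂ) ≠ 0 := by
    intro hzz
    rw [Complex.ext_iff] at hzz
    simp at hzz
    rw [hzz.1, hzz.2] at h; norm_num at h
  have habs : ‖(⟨x, y⟩ : ℂ)‖ = 1 := by
    rw [Complex.norm_def, Complex.normSq_mk]
    rw [show x*x+y*y = x^2+y^2 by ring, h, Real.sqrt_one]
  refine ⟨Complex.arg ⟨x, y⟩, ?_, ?_⟩
  · rw [Complex.cos_arg hz, habs]; simp
  · rw [Complex.sin_arg, habs]; simp

lemma det4 (α γ p q r s : ℝ) :
    Matrix.det !![α, γ, 0, 0; -γ, α, 0, 0; (0:ℝ), 0, p, r; 0, 0, q, s]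
      = (α^2 + γ^2) * (p*s - q*r) := by
  simp [Matrix.det_succ_row_zero, Fin.sum_univ_succ, Fin.succAbove]
  ring


set_option maxHeartbeats 1000000 in
/-- Proof of Theorem 4.1: a special-orthogonal transformation `A ∈ SO(4)` leaving the
Killing field `X_{a∧b}` invariant lies in `SO(2) × SO(2)` with respect to an adapted
orthonormal basis `{a, b, c, d}`. -/
theorem killing_invariant_so4_block (a b : F4) (ha : ‖a‖ = 1) (hb : ‖b‖ = 1)
    (hab : ⟪a, b⟫ = 0) (A : F4 →ₗᵢ[ℝ] F4) (hdet : LinearMap.det A.toLinearMap = 1)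
    (hinv : ∀ p : F4, KF (A a) (A b) p = KF a b p) :
    ∃ (c d : F4) (θ₁ θ₂ : ℝ), Orthonormal ℝ ![a, b, c, d] ∧
      A a = cos θ₁ • a + sin θ₁ • b ∧ A b = (-sin θ₁) • a + cos θ₁ • b ∧
      A c = cos θ₂ • c + sin θ₂ • d ∧ A d = (-sin θ₂) • c + cos θ₂ • d := by
  have haa : ⟪a, a⟫ = 1 := by
    rw [real_inner_self_eq_norm_mul_norm, ha]; norm_num
  have hbb : ⟪b, b⟫ = 1 := by
    rw [real_inner_self_eq_norm_mul_norm, hb]; norm_num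
  have hba : ⟪b, a⟫ = 0 := by rw [real_inner_comm]; exact hab
  have hAi : ∀ x y : F4, ⟪A x, A y⟫ = ⟪x, y⟫ := fun x y => A.inner_map_map x y
  set α : ℝ := ⟪A a, a⟫ with hα
  set γ : ℝ := ⟪A b, a⟫ with hγ
  have h1 : γ • A a - α • A b = -b := by
    have h := hinv a
    simp only [KF, hba, haa, zero_smul, one_smul, zero_sub] at h
    exact h
  have h2 : (⟪A b, b⟫ : ℝ) • A a - (⟪A a, b⟫ : ℝ) • A b = a := by
    have h := hinv b
    simp only [KF, hbb, hab, zero_smul, one_smul, sub_zero] at h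
    exact h
  have hAaAa : ⟪A a, A a⟫ = 1 := by rw [hAi]; exact haa
  have hAbAb : ⟪A b, A b⟫ = 1 := by rw [hAi]; exact hbb
  have hAaAb : ⟪A a, A b⟫ = 0 := by rw [hAi]; exact hab
  have hAbAa : ⟪A b, A a⟫ = 0 := by rw [hAi]; exact hba
  have hδ : (⟪A b, b⟫ : ℝ) = α := by
    have h := congrArg (fun x => (⟪A a, x⟫ : ℝ)) h2
    simp only [inner_sub_right, inner_smul_right, hAaAa, hAaAb, mul_one, mul_zero,
      sub_zero] at h
    exact h
  have hβ : (⟪A a, b⟫ : ℝ) = -γ := by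
    have h := congrArg (fun x => (⟪A b, x⟫ : ℝ)) h2
    simp only [inner_sub_right, inner_smul_right, hAbAa, hAbAb, mul_one, mul_zero,
      zero_sub] at h
    linarith
  rw [hδ, hβ] at h2
  rw [neg_smul, sub_neg_eq_add] at h2
  have eqa : α • A a + γ • A b = a := h2
  have eqb : α • A b - γ • A a = b := by
    have h := congrArg (fun x => -x) h1
    simp only [neg_neg, neg_sub] at h
    exact h
  have hαγ : α ^ 2 + γ ^ 2 = 1 := by
    have h := haa
    rw [← eqa] at h
    simp only [inner_add_left, inner_add_right, real_inner_smul_left, real_inner_smul_right,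
      hAaAa, hAbAb, hAaAb, hAbAa] at h
    linear_combination h
  have hAa : A a = α • a + (-γ) • b := by
    have h : α • (α • A a + γ • A b) + (-γ) • (α • A b - γ • A a) = (α ^ 2 + γ ^ 2) • A a := by
      module
    rw [eqa, eqb, hαγ, one_smul] at h
    exact h.symm
  have hAb : A b = γ • a + α • b := by
    have h : γ • (α • A a + γ • A b) + α • (α • A b - γ • A a) = (α ^ 2 + γ ^ 2) • A b := by
      module
    rw [eqa, eqb, hαγ, one_smul] at h
    exact h.symm
  -- orthogonal complement of span {a, b}
  set K : Submodule ℝ F4 := (Submodule.span ℝ ({a, b} : Set F4))ᗮ with hK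
  have hrange : Set.range ![a, b] = ({a, b} : Set F4) := by
    ext x
    simp [Fin.exists_fin_two]
    tauto
  have hon2 : Orthonormal ℝ ![a, b] := by
    rw [orthonormal_iff_ite]
    intro i j
    fin_cases i <;> fin_cases j <;>
      simp [haa, hab, hba, hbb, ha, hb]
  have hfinK : Module.finrank ℝ K = 2 := by
    have hsp : Module.finrank ℝ (Submodule.span ℝ ({a, b} : Set F4)) = 2 := by
      rw [← hrange, finrank_span_eq_card hon2.linearIndependent]
      simp
    have h4 : Module.finrank ℝ F4 = 4 := finrank_euclideanSpace_fin
    have := Submodule.finrank_add_finrank_orthogonal (Submodule.span ℝ ({a, b} : Set F4))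
    rw [hsp, h4, ← hK] at this
    omega
  set OBK : OrthonormalBasis (Fin 2) ℝ K :=
    (stdOrthonormalBasis ℝ K).reindex (finCongr hfinK) with hOBK
  set c : F4 := (OBK 0 : F4) with hc
  set d : F4 := (OBK 1 : F4) with hd
  have hcK : c ∈ K := (OBK 0).2
  have hdK : d ∈ K := (OBK 1).2
  have honK := OBK.orthonormal
  rw [orthonormal_iff_ite] at honK
  have hcc : ⟪c, c⟫ = 1 := by
    have h := honK 0 0
    rw [Submodule.coe_inner] at h
    simpa using h
  have hdd : ⟪d, d⟫ = 1 := by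
    have h := honK 1 1
    rw [Submodule.coe_inner] at h
    simpa using h
  have hcd : ⟪c, d⟫ = 0 := by
    have h := honK 0 1
    rw [Submodule.coe_inner] at h
    simpa using h
  have hdc : ⟪d, c⟫ = 0 := by rw [real_inner_comm]; exact hcd
  have haK : a ∈ Submodule.span ℝ ({a, b} : Set F4) :=
    Submodule.subset_span (by simp)
  have hbK : b ∈ Submodule.span ℝ ({a, b} : Set F4) :=
    Submodule.subset_span (by simp)
  have hinner_zero : ∀ v ∈ K, ⟪a, v⟫ = 0 ∧ ⟪b, v⟫ = 0 := by
    intro v hv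
    rw [hK, Submodule.mem_orthogonal] at hv
    exact ⟨hv a haK, hv b hbK⟩
  have hac : ⟪a, c⟫ = 0 := (hinner_zero c hcK).1
  have hbc : ⟪b, c⟫ = 0 := (hinner_zero c hcK).2
  have had : ⟪a, d⟫ = 0 := (hinner_zero d hdK).1
  have hbd : ⟪b, d⟫ = 0 := (hinner_zero d hdK).2
  have hca : ⟪c, a⟫ = 0 := by rw [real_inner_comm]; exact hac
  have hcb : ⟪c, b⟫ = 0 := by rw [real_inner_comm]; exact hbc
  have hda : ⟪d, a⟫ = 0 := by rw [real_inner_comm]; exact had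
  have hdb : ⟪d, b⟫ = 0 := by rw [real_inner_comm]; exact hbd
  -- A maps K into K
  have hAK : ∀ v ∈ K, A v ∈ K := by
    intro v hv
    obtain ⟨hav, hbv⟩ := hinner_zero v hv
    rw [hK, Submodule.mem_orthogonal]
    intro u hu
    obtain ⟨m, n, rfl⟩ := Submodule.mem_span_pair.mp hu
    have ha1 : ⟪a, A v⟫ = 0 := by
      rw [← eqa]
      simp only [inner_add_left, real_inner_smul_left, hAi]
      rw [hav, hbv]
      ring
    have hb1 : ⟪b, A v⟫ = 0 := by
      rw [← eqb]
      simp only [inner_sub_left, real_inner_smul_left, hAi]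
      rw [hav, hbv]
      ring
    simp only [inner_add_left, real_inner_smul_left, ha1, hb1]
    ring
  -- decomposition of elements of K
  have hdecomp : ∀ w : F4, w ∈ K → w = ⟪c, w⟫ • c + ⟪d, w⟫ • d := by
    intro w hw
    have h := OBK.sum_repr' (⟨w, hw⟩ : K)
    have h2 := congrArg (Subtype.val : K → F4) h
    rw [Fin.sum_univ_two, Submodule.coe_add, SetLike.val_smul, SetLike.val_smul] at h2
    rw [Submodule.coe_inner, Submodule.coe_inner] at h2
    exact h2.symm
  set p : ℝ := ⟪c, A c⟫ with hp'
  set q : ℝ := ⟪d, A c⟫ with hq'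
  set r : ℝ := ⟪c, A d⟫ with hr'
  set s : ℝ := ⟪d, A d⟫ with hs'
  have hAc : A c = p • c + q • d := hdecomp _ (hAK _ hcK)
  have hAd : A d = r • c + s • d := hdecomp _ (hAK _ hdK)
  have hpq : p ^ 2 + q ^ 2 = 1 := by
    have h : (⟪A c, A c⟫ : ℝ) = 1 := by rw [hAi]; exact hcc
    rw [hAc] at h
    simp only [inner_add_left, inner_add_right, real_inner_smul_left, real_inner_smul_right,
      hcc, hdd, hcd, hdc] at h
    linear_combination h
  have hrs : r ^ 2 + s ^ 2 = 1 := by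
    have h : (⟪A d, A d⟫ : ℝ) = 1 := by rw [hAi]; exact hdd
    rw [hAd] at h
    simp only [inner_add_left, inner_add_right, real_inner_smul_left, real_inner_smul_right,
      hcc, hdd, hcd, hdc] at h
    linear_combination h
  have hortho : p * r + q * s = 0 := by
    have h : (⟪A c, A d⟫ : ℝ) = 0 := by rw [hAi]; exact hcd
    rw [hAc, hAd] at h
    simp only [inner_add_left, inner_add_right, real_inner_smul_left, real_inner_smul_right,
      hcc, hdd, hcd, hdc] at h
    linear_combination h
  -- the orthonormal family a b c d
  have hon4 : Orthonormal ℝ ![a, b, c, d] := by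
    rw [orthonormal_iff_ite]
    intro i j
    fin_cases i <;> fin_cases j <;>
      simp [haa, hab, hba, hbb, hac, hca, hbc, hcb, had, hda, hbd, hdb, hcc, hcd, hdc, hdd, ha, hb,
          (by rw [norm_eq_sqrt_real_inner, hcc, Real.sqrt_one] : ‖c‖ = 1),
          (by rw [norm_eq_sqrt_real_inner, hdd, Real.sqrt_one] : ‖d‖ = 1)]
  -- build the orthonormal basis and compute det
  have hcard : Fintype.card (Fin 4) = Module.finrank ℝ F4 := by
    rw [finrank_euclideanSpace_fin]; simp
  set B : Module.Basis (Fin 4) ℝ F4 := basisOfOrthonormalOfCardEqFinrank hon4 hcard with hB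
  have hBcoe : ⇑B = ![a, b, c, d] := coe_basisOfOrthonormalOfCardEqFinrank hon4 hcard
  set OB : OrthonormalBasis (Fin 4) ℝ F4 :=
    B.toOrthonormalBasis (by rw [hBcoe]; exact hon4) with hOB
  have hOBcoe : ⇑OB = ![a, b, c, d] := by
    rw [hOB, Module.Basis.coe_toOrthonormalBasis, hBcoe]
  have hmat : LinearMap.toMatrix OB.toBasis OB.toBasis A.toLinearMap =
      !![α, γ, 0, 0; -γ, α, 0, 0; (0:ℝ), 0, p, r; 0, 0, q, s] := by
    ext i j
    rw [LinearMap.toMatrix_apply, OrthonormalBasis.coe_toBasis,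
      OrthonormalBasis.coe_toBasis_repr_apply, OrthonormalBasis.repr_apply_apply, hOBcoe]
    fin_cases i <;> fin_cases j <;>
      simp only [Fin.zero_eta, Fin.mk_one, Fin.reduceFinMk, Matrix.cons_val', Matrix.cons_val_zero, Matrix.cons_val_one, Matrix.head_cons,
        Matrix.empty_val', Matrix.cons_val_fin_one, Matrix.head_fin_const, Matrix.cons_val_two,
        Matrix.tail_cons, Matrix.cons_val_three, Matrix.of_apply, Fin.isValue,
        LinearIsometry.coe_toLinearMap, hAa, hAb, hAc, hAd, inner_add_right,
        real_inner_smul_right, haa, hab, hba, hbb, hac, hca, hbc, hcb, had, hda, hbd, hdb,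
        hcc, hcd, hdc, hdd, mul_one, mul_zero, add_zero, zero_add, mul_neg, neg_zero,
        neg_neg]
  have hdet2 : Matrix.det !![α, γ, 0, 0; -γ, α, 0, 0; (0:ℝ), 0, p, r; 0, 0, q, s] = 1 := by
    rw [← hmat, LinearMap.det_toMatrix]
    exact hdet
  have hdetv : p * s - q * r = 1 := by
    rw [det4, hαγ, one_mul] at hdet2
    exact hdet2
  have hr2 : r = -q := by linear_combination -r*hpq - q*hdetv + p*hortho
  have hs2 : s = p := by linear_combination -s*hpq + p*hdetv + q*hortho
  obtain ⟨θ₁, hcos1, hsin1⟩ := exists_cos_sin α (-γ) (by linear_combination hαγ)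
  obtain ⟨θ₂, hcos2, hsin2⟩ := exists_cos_sin p q hpq
  refine ⟨c, d, θ₁, θ₂, hon4, ?_, ?_, ?_, ?_⟩
  · rw [hcos1, hsin1]; exact hAa
  · rw [hcos1, hsin1, neg_neg]; exact hAb
  · rw [hcos2, hsin2]; exact hAc
  · rw [hcos2, hsin2]
    rw [hAd, hr2, hs2]
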